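/- arXiv:2507.05710 — 4 statements merged into one kernel-verified Lean document; each statement's English description precedes it below -/
import Mathlib

section
/- Fix σ > 0 and ε ∈ (0,1). For each μ ∈ ℝ let X_μ ~ N(μ, σ²) and let k(μ) = VaR_ε[-|X_μ|], i.e. the unique k ≤ 0 with P(-|X_μ| ≤ k) = ε. Then μ ↦ k(μ) is differentiable and its derivative equals (φ((k(μ)-μ)/σ) - φ((-k(μ)-μ)/σ)) / (φ((k(μ)-μ)/σ) + φ((-k(μ)-μ)/σ)), where φ(z) = (1/√(2π))·exp(-z²/2) is the standard normal probability density function. -/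
open MeasureTheory ProbabilityTheory

/-- The Gaussian measure on ℝ with mean `μ` and standard deviation `σ`. -/
noncomputable def gaussMeas (μ σ : ℝ) : Measure ℝ :=
  gaussianReal μ ⟨σ ^ 2, sq_nonneg σ⟩

/-- The standard normal probability density function `φ(z) = (1/√(2π))·exp(-z²/2)`. -/
noncomputable def stdNormalPdf (z : ℝ) : ℝ :=
  (Real.sqrt (2 * Real.pi))⁻¹ * Real.exp (-z ^ 2 / 2)

/-!
Standardizing `X_μ = μ + σZ`, the defining equation of `k(μ)` reads `G(μ, k(μ)) = 1 - ε` for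
all `μ`, where `G(μ, y) = ∫_{(y-μ)/σ}^{(-y-μ)/σ} φ`. By the fundamental theorem of calculus `G`
is strictly differentiable with `∂G/∂y = -(φ((y-μ)/σ) + φ((-y-μ)/σ))/σ < 0`, so every section
`G(μ, ·)` is strictly decreasing. The implicit function theorem then yields a differentiable
local solution, which coincides with `k` by injectivity of the sections, and
`k' = -(∂G/∂μ)/(∂G/∂y)`.
-/

open Filter Topology

section ImplicitFunction

variable {𝕜 : Type*} [NontriviallyNormedField 𝕜]
  {E₁ : Type*} [NormedAddCommGroup E₁] [NormedSpace 𝕜 E₁] [CompleteSpace E₁]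
  {E₂ : Type*} [NormedAddCommGroup E₂] [NormedSpace 𝕜 E₂] [CompleteSpace E₂]
  {F : Type*} [NormedAddCommGroup F] [NormedSpace 𝕜 F] [CompleteSpace F]

theorem HasStrictFDerivAt.hasStrictFDerivAt_of_eventually_apply_eq {f : E₁ × E₂ → F}
    {f' : E₁ × E₂ →L[𝕜] F} {k : E₁ → E₂} {x₀ : E₁} (hf : HasStrictFDerivAt f f' (x₀, k x₀))
    (hf₂ : (f' ∘L .inr 𝕜 E₁ E₂).IsInvertible)
    (hk : ∀ᶠ x in 𝓝 x₀, f (x, k x) = f (x₀, k x₀))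
    (hinj : ∀ᶠ x in 𝓝 x₀, Function.Injective fun y => f (x, y)) :
    HasStrictFDerivAt k (-(f' ∘L .inr 𝕜 E₁ E₂).inverse ∘L (f' ∘L .inl 𝕜 E₁ E₂)) x₀ := by
  refine (hf.hasStrictFDerivAt_implicitFunctionOfProdDomain hf₂).congr_of_eventuallyEq ?_
  filter_upwards [hf.eventually_apply_implicitFunctionOfProdDomain hf₂, hk, hinj]
    with x hψ hkx hinjx
  exact hinjx (hψ.trans hkx.symm)

open ContinuousLinearMap in
theorem HasStrictFDerivAt.hasStrictDerivAt_of_eventually_apply_eq [CompleteSpace 𝕜]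
    {f : 𝕜 × 𝕜 → 𝕜} {a b : 𝕜} {k : 𝕜 → 𝕜} {x₀ : 𝕜}
    (hf : HasStrictFDerivAt f (a • fst 𝕜 𝕜 𝕜 + b • snd 𝕜 𝕜 𝕜) (x₀, k x₀)) (hb : b ≠ 0)
    (hk : ∀ᶠ x in 𝓝 x₀, f (x, k x) = f (x₀, k x₀))
    (hinj : ∀ᶠ x in 𝓝 x₀, Function.Injective fun y => f (x, y)) :
    HasStrictDerivAt k (-a / b) x₀ := by
  have hf₂ : (a • fst 𝕜 𝕜 𝕜 + b • snd 𝕜 𝕜 𝕜) ∘L inr 𝕜 𝕜 𝕜 = b • .id 𝕜 𝕜 := by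
    ext
    simp
  have hright : (b • .id 𝕜 𝕜) ∘L (b⁻¹ • .id 𝕜 𝕜) = .id 𝕜 𝕜 := by
    ext
    simp [hb]
  have hleft : (b⁻¹ • .id 𝕜 𝕜) ∘L (b • .id 𝕜 𝕜) = .id 𝕜 𝕜 := by
    ext
    simp [hb]
  have hk' := hf.hasStrictFDerivAt_of_eventually_apply_eq
    (hf₂ ▸ IsInvertible.of_inverse hright hleft) hk hinj
  rw [hf₂, inverse_eq hright hleft] at hk'
  exact hk'.hasStrictDerivAt.congr_deriv (by simp [div_eq_mul_inv, mul_comm])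

end ImplicitFunction

lemma stdNormalPdf_eq_gaussianPDFReal : stdNormalPdf = gaussianPDFReal 0 1 := by
  ext x
  simp [stdNormalPdf, gaussianPDFReal]

lemma stdNormalPdf_pos (z : ℝ) : 0 < stdNormalPdf z := by
  rw [stdNormalPdf_eq_gaussianPDFReal]
  exact gaussianPDFReal_pos 0 1 z one_ne_zero

lemma continuous_stdNormalPdf : Continuous stdNormalPdf := by
  unfold stdNormalPdf
  fun_prop

instance (μ σ : ℝ) : IsProbabilityMeasure (gaussMeas μ σ) := by
  unfold gaussMeas
  exact instIsProbabilityMeasureGaussianReal _ _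

lemma gaussMeas_eq_map (μ σ : ℝ) :
    gaussMeas μ σ = (gaussianReal 0 1).map (fun z => σ * z + μ) := by
  rw [← Function.comp_def (· + μ) (σ * ·),
    ← Measure.map_map (measurable_add_const μ) (measurable_const_mul σ),
    gaussianReal_map_const_mul, gaussianReal_map_add_const]
  simp only [gaussMeas, mul_zero, zero_add, mul_one]
  rfl

lemma gaussianReal_real_Ioo {a b : ℝ} (hab : a ≤ b) :
    (gaussianReal 0 1).real (Set.Ioo a b) = ∫ x in a..b, stdNormalPdf x := by
  rw [measureReal_def, gaussianReal_apply_eq_integral 0 one_ne_zero, ENNReal.toReal_ofReal,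
    intervalIntegral.integral_of_le hab, integral_Ioc_eq_integral_Ioo,
    stdNormalPdf_eq_gaussianPDFReal]
  exact setIntegral_nonneg measurableSet_Ioo fun x _ => gaussianPDFReal_nonneg 0 1 x

lemma gaussMeas_real_Ioo {μ σ : ℝ} (hσ : 0 < σ) {a b : ℝ} (hab : a ≤ b) :
    (gaussMeas μ σ).real (Set.Ioo a b) = ∫ x in (a - μ) / σ..(b - μ) / σ, stdNormalPdf x := by
  have hpre : (fun z => σ * z + μ) ⁻¹' Set.Ioo a b = Set.Ioo ((a - μ) / σ) ((b - μ) / σ) := by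
    ext z
    simp only [Set.mem_preimage, Set.mem_Ioo, div_lt_iff₀ hσ, lt_div_iff₀ hσ]
    constructor <;> rintro ⟨h₁, h₂⟩ <;> constructor <;> linarith
  rw [gaussMeas_eq_map, map_measureReal_apply (by fun_prop) measurableSet_Ioo, hpre,
    gaussianReal_real_Ioo (by gcongr)]

lemma gaussMeas_real_neg_abs_le {μ σ k : ℝ} (hσ : 0 < σ) (hk : k ≤ 0) :
    (gaussMeas μ σ).real {x | -|x| ≤ k} =
      1 - ∫ x in (k - μ) / σ..(-k - μ) / σ, stdNormalPdf x := by
  have : {x : ℝ | -|x| ≤ k} = (Set.Ioo k (-k))ᶜ := by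
    ext x
    simp only [Set.mem_ofPred_eq, Set.mem_compl_iff, Set.mem_Ioo, neg_le, le_abs, neg_le_neg_iff,
      not_and_or, not_lt]
    exact or_comm
  rw [this, measureReal_compl measurableSet_Ioo, gaussMeas_real_Ioo hσ (by linarith), probReal_univ]

noncomputable def centralMass (σ μ y : ℝ) : ℝ :=
  ∫ x in (y - μ) / σ..(-y - μ) / σ, stdNormalPdf x

open ContinuousLinearMap in
lemma hasStrictFDerivAt_centralMass (σ μ y : ℝ) :
    HasStrictFDerivAt (fun p : ℝ × ℝ => centralMass σ p.1 p.2)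
      (((stdNormalPdf ((y - μ) / σ) - stdNormalPdf ((-y - μ) / σ)) / σ) • fst ℝ ℝ ℝ +
        -((stdNormalPdf ((y - μ) / σ) + stdNormalPdf ((-y - μ) / σ)) / σ) • snd ℝ ℝ ℝ) (μ, y) := by
  let L : ℝ × ℝ →L[ℝ] ℝ × ℝ :=
    (σ⁻¹ • (snd ℝ ℝ ℝ - fst ℝ ℝ ℝ)).prod (σ⁻¹ • (-snd ℝ ℝ ℝ - fst ℝ ℝ ℝ))
  have hL (p : ℝ × ℝ) : L p = ((p.2 - p.1) / σ, (-p.2 - p.1) / σ) := by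
    simp [L, div_eq_inv_mul]
  have hint := intervalIntegral.integral_hasStrictFDerivAt
    (continuous_stdNormalPdf.intervalIntegrable ((y - μ) / σ) ((-y - μ) / σ))
    (continuous_stdNormalPdf.stronglyMeasurableAtFilter _ _)
    (continuous_stdNormalPdf.stronglyMeasurableAtFilter _ _)
    continuous_stdNormalPdf.continuousAt continuous_stdNormalPdf.continuousAt
  rw [← hL (μ, y)] at hint
  refine (hint.comp (μ, y) L.hasStrictFDerivAt).congr_fderiv (by ext <;> simp [L] <;> ring)
    |>.congr_of_eventuallyEq (.of_forall fun p => ?_)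
  simp [centralMass, hL]

lemma strictAnti_centralMass {σ : ℝ} (hσ : 0 < σ) (μ : ℝ) : StrictAnti (centralMass σ μ) := by
  refine strictAnti_of_hasDerivAt_neg (f' := fun y =>
    -((stdNormalPdf ((y - μ) / σ) + stdNormalPdf ((-y - μ) / σ)) / σ)) (fun y => ?_) fun y => ?_
  · exact ((hasStrictFDerivAt_centralMass σ μ y).hasFDerivAt.comp_hasDerivAt y
      ((hasDerivAt_const y μ).prodMk (hasDerivAt_id y))).congr_deriv (by simp)
  · exact neg_neg_of_pos (div_pos (add_pos (stdNormalPdf_pos _) (stdNormalPdf_pos _)) hσ)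

theorem hasDerivAt_var_neg_abs_general
    (σ ε : ℝ) (hσ : 0 < σ)
    (k : ℝ → ℝ) (hk0 : ∀ μ, k μ ≤ 0)
    (hk : ∀ μ, gaussMeas μ σ {x | -|x| ≤ k μ} = ENNReal.ofReal ε) :
    ∀ μ, HasDerivAt k
      ((stdNormalPdf ((k μ - μ) / σ) - stdNormalPdf ((-k μ - μ) / σ)) /
        (stdNormalPdf ((k μ - μ) / σ) + stdNormalPdf ((-k μ - μ) / σ))) μ := by
  intro μ
  have hmass (x : ℝ) : centralMass σ x (k x) = 1 - (ENNReal.ofReal ε).toReal := by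
    rw [← hk x, ← measureReal_def, gaussMeas_real_neg_abs_le hσ (hk0 x), sub_sub_cancel,
      centralMass]
  have hφ : 0 < stdNormalPdf ((k μ - μ) / σ) + stdNormalPdf ((-k μ - μ) / σ) :=
    add_pos (stdNormalPdf_pos _) (stdNormalPdf_pos _)
  have hderiv := (hasStrictFDerivAt_centralMass σ μ (k μ)).hasStrictDerivAt_of_eventually_apply_eq
    (neg_ne_zero.mpr (div_pos hφ hσ).ne')
    (.of_forall fun x => (hmass x).trans (hmass μ).symm)
    (.of_forall fun x => (strictAnti_centralMass hσ x).injective)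
  exact hderiv.hasDerivAt.congr_deriv (by rw [neg_div_neg_eq, div_div_div_cancel_right₀ hσ.ne'])

/-- Fix `σ > 0` and `ε ∈ (0,1)`. For each `μ`, let `k μ = VaR_ε[-|X_μ|]` with
`X_μ ~ N(μ, σ²)`, i.e. the unique `k ≤ 0` with `P(-|X_μ| ≤ k) = ε`. Then `k` is
differentiable in `μ`, with derivative
`(φ((k(μ)-μ)/σ) - φ((-k(μ)-μ)/σ)) / (φ((k(μ)-μ)/σ) + φ((-k(μ)-μ)/σ))`. -/
theorem hasDerivAt_var_neg_abs
    (σ ε : ℝ) (hσ : 0 < σ) (hε : ε ∈ Set.Ioo (0 : ℝ) 1)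
    (k : ℝ → ℝ) (hk0 : ∀ μ, k μ ≤ 0)
    (hk : ∀ μ, gaussMeas μ σ {x | -|x| ≤ k μ} = ENNReal.ofReal ε) :
    ∀ μ, HasDerivAt k
      ((stdNormalPdf ((k μ - μ) / σ) - stdNormalPdf ((-k μ - μ) / σ)) /
        (stdNormalPdf ((k μ - μ) / σ) + stdNormalPdf ((-k μ - μ) / σ))) μ :=
  hasDerivAt_var_neg_abs_general σ ε hσ k hk0 hk
end

section
/- Let X ~ N(μ, σ²) with σ > 0 and let ε ∈ (0,1). Then CVaR_ε[-|X|²] ≤ -(CVaR_ε[-|X|])². -/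
open MeasureTheory ProbabilityTheory

/-- The conditional value-at-risk of a function `Y` of a random variable with law `P`,
at level `ε`, given that `k` is the value-at-risk `VaR_ε[Y]`:
`CVaR_ε[Y] = (1/(1-ε))·E[Y·1{Y ≥ k}]`. -/
noncomputable def cvar (P : Measure ℝ) (ε : ℝ) (Y : ℝ → ℝ) (k : ℝ) : ℝ :=
  (1 / (1 - ε)) * ∫ x in {x | k ≤ Y x}, Y x ∂P

/-!
Both values-at-risk cut off the same event up to a null set: `{-|X| ≥ k}` and `{-|X|² ≥ k₂}`
are both of the form `{|X| ≤ c}`, hence nested, and both have probability `1 - ε` because a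
Gaussian has no atoms. On that event `A`, both CVaRs are averages over `A`, and the claim
`⨍_A -|X|² ≤ -(⨍_A -|X|)²` is Jensen's inequality for the square.
-/

open Set

theorem subset_or_subset_of_downward_closed {α β : Type*} [LinearOrder β] (f : α → β)
    {s t : Set α} (hs : ∀ x y, f x ≤ f y → y ∈ s → x ∈ s)
    (ht : ∀ x y, f x ≤ f y → y ∈ t → x ∈ t) : s ⊆ t ∨ t ⊆ s := by
  rw [or_iff_not_imp_left, not_subset]
  rintro ⟨x, hxs, hxt⟩ y hyt
  rcases le_total (f x) (f y) with hxy | hyx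
  · exact absurd (ht x y hxy hyt) hxt
  · exact hs y x hyx hxs

section Measure

variable {α : Type*} [MeasurableSpace α] {μ : Measure α}

theorem ae_eq_of_subset_or_subset_of_measureReal_eq [IsFiniteMeasure μ] {s t : Set α}
    (hst : s ⊆ t ∨ t ⊆ s) (hs : NullMeasurableSet s μ) (ht : NullMeasurableSet t μ)
    (h : μ.real s = μ.real t) : s =ᵐ[μ] t := by
  rw [measureReal_eq_measureReal_iff] at h
  rcases hst with hst | hts
  · exact ae_eq_of_subset_of_measure_ge hst h.ge hs (measure_ne_top μ t)
  · exact (ae_eq_of_subset_of_measure_ge hts h.le ht (measure_ne_top μ s)).symm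

theorem probReal_setOf_le_eq_one_sub [IsProbabilityMeasure μ] {f : α → ℝ} (hf : Measurable f)
    {k ε : ℝ} (hε : 0 ≤ ε) (hlevel : μ {x | f x = k} = 0)
    (h : μ {x | f x ≤ k} = ENNReal.ofReal ε) : μ.real {x | k ≤ f x} = 1 - ε := by
  have hlt : {x | f x < k} = {x | f x ≤ k} \ {x | f x = k} := by
    ext x; simp [lt_iff_le_and_ne]
  have hcompl : {x | k ≤ f x} = {x | f x < k}ᶜ := by
    ext x; simp
  rw [hcompl, probReal_compl_eq_one_sub (measurableSet_lt hf measurable_const), measureReal_def,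
    hlt, measure_sdiff_null hlevel, h, ENNReal.toReal_ofReal hε]

theorem sq_setAverage_le_setAverage_sq {f : α → ℝ} {s : Set α} (h0 : μ s ≠ 0) (hfin : μ s ≠ ⊤)
    (hf : IntegrableOn f s μ) (hf2 : IntegrableOn (fun x => f x ^ 2) s μ) :
    (⨍ x in s, f x ∂μ) ^ 2 ≤ ⨍ x in s, f x ^ 2 ∂μ :=
  (even_two.convexOn_pow (𝕜 := ℝ)).map_set_average_le (continuous_pow 2).continuousOn
    isClosed_univ h0 hfin (ae_of_all _ fun _ => mem_univ _) hf hf2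

end Measure

theorem measure_abs_eq_eq_zero (P : Measure ℝ) [NullSingletonClass P] (c : ℝ) :
    P {x | |x| = c} = 0 :=
  ((toFinite {c, -c}).subset fun _ hx => eq_or_eq_neg_of_abs_eq hx).measure_zero P

theorem cvar_eq_setAverage {P : Measure ℝ} {ε k : ℝ} {Y : ℝ → ℝ}
    (h : P.real {x | k ≤ Y x} = 1 - ε) : cvar P ε Y k = ⨍ x in {x | k ≤ Y x}, Y x ∂P := by
  rw [cvar, setAverage_eq, h, smul_eq_mul, one_div]

theorem cvar_neg_abs_sq_le_neg_sq_cvar_neg_abs_of_nullSingleton (P : Measure ℝ)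
    [IsProbabilityMeasure P] [NullSingletonClass P] {ε k k₂ : ℝ} (hε : ε ∈ Ico 0 1)
    (hk : P {x | -|x| ≤ k} = ENNReal.ofReal ε)
    (hk₂ : P {x | -|x| ^ 2 ≤ k₂} = ENNReal.ofReal ε) :
    cvar P ε (fun x => -|x| ^ 2) k₂ ≤ -(cvar P ε (fun x => -|x|) k) ^ 2 := by
  set A := {x : ℝ | k ≤ -|x|}
  set B := {x : ℝ | k₂ ≤ -|x| ^ 2}
  have hPA : P.real A = 1 - ε := by
    refine probReal_setOf_le_eq_one_sub (by fun_prop) hε.1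
      (measure_mono_null (fun x (hx : -|x| = k) => ?_) (measure_abs_eq_eq_zero P (-k))) hk
    show |x| = -k
    linarith
  have hPB : P.real B = 1 - ε := by
    refine probReal_setOf_le_eq_one_sub (by fun_prop) hε.1
      (measure_mono_null (fun x (hx : -|x| ^ 2 = k₂) => ?_)
        (measure_abs_eq_eq_zero P √(-k₂))) hk₂
    show |x| = √(-k₂)
    rw [← hx, neg_neg, Real.sqrt_sq (abs_nonneg x)]
  have hBA : B =ᵐ[P] A := by
    refine ae_eq_of_subset_or_subset_of_measureReal_eq
      (subset_or_subset_of_downward_closed (fun x : ℝ => |x|) ?_ ?_)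
      (measurableSet_le measurable_const (by fun_prop)).nullMeasurableSet
      (measurableSet_le measurable_const (by fun_prop)).nullMeasurableSet (hPB.trans hPA.symm)
    · intro x y hxy (hy : k₂ ≤ -|y| ^ 2)
      show k₂ ≤ -|x| ^ 2
      nlinarith [abs_nonneg x]
    · intro x y hxy (hy : k ≤ -|y|)
      show k ≤ -|x|
      linarith
  have hA_Icc : A ⊆ Icc k (-k) := fun x (hx : k ≤ -|x|) =>
    ⟨by linarith [neg_abs_le x], by linarith [le_abs_self x]⟩
  have hPA_ne : P A ≠ 0 := (measureReal_ne_zero_iff).mp (by rw [hPA]; linarith [hε.2])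
  have jensen := sq_setAverage_le_setAverage_sq (f := fun x => -|x|) hPA_ne (measure_ne_top P A)
    ((continuous_abs.neg).integrableOn_Icc.mono_set hA_Icc)
    (((continuous_abs.neg).pow 2).integrableOn_Icc.mono_set hA_Icc)
  rw [cvar_eq_setAverage hPA, cvar_eq_setAverage hPB, Measure.restrict_congr_set hBA,
    average_neg]
  simp only [neg_sq] at jensen
  linarith

instance inst_s4 (μ σ : ℝ) : IsProbabilityMeasure (gaussMeas μ σ) :=
  instIsProbabilityMeasureGaussianReal _ _

theorem nullSingletonClass_gaussMeas (μ : ℝ) {σ : ℝ} (hσ : σ ≠ 0) :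
    NullSingletonClass (gaussMeas μ σ) :=
  nullSingletonClass_gaussianReal fun h =>
    hσ ((pow_eq_zero_iff two_ne_zero).mp (congrArg Subtype.val h))

/-- For `X ~ N(μ, σ²)` with `σ > 0` and `ε ∈ (0,1)`,
`CVaR_ε[-|X|²] ≤ -(CVaR_ε[-|X|])²`, where `k = VaR_ε[-|X|]` and `k₂ = VaR_ε[-|X|²]`
are the respective values-at-risk. -/
theorem cvar_neg_abs_sq_le_neg_sq_cvar_neg_abs
    (μ σ ε k k₂ : ℝ) (hσ : 0 < σ) (hε : ε ∈ Set.Ioo (0 : ℝ) 1)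
    (hk : gaussMeas μ σ {x | -|x| ≤ k} = ENNReal.ofReal ε)
    (hk₂ : gaussMeas μ σ {x | -|x| ^ 2 ≤ k₂} = ENNReal.ofReal ε) :
    cvar (gaussMeas μ σ) ε (fun x => -|x| ^ 2) k₂ ≤
      -(cvar (gaussMeas μ σ) ε (fun x => -|x|) k) ^ 2 := by
  have := nullSingletonClass_gaussMeas μ hσ.ne'
  exact cvar_neg_abs_sq_le_neg_sq_cvar_neg_abs_of_nullSingleton _ (Ioo_subset_Ico_self hε) hk hk₂
end

section
/- Fix σ > 0 and ε ∈ (0,1). For each μ ∈ ℝ let X_μ ~ N(μ, σ²) and define g(μ) = CVaR_ε[-|X_μ|]. Then g is monotonically decreasing in |μ|: for any μ₁, μ₂ with |μ₁| < |μ₂| one has g(μ₁) > g(μ₂). Equivalently, g is strictly decreasing on (0, ∞), strictly increasing on (-∞, 0), and g(μ) = g(-μ) for all μ. -/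
open MeasureTheory ProbabilityTheory

/-! Let `c = -VaR_ε[-|X|]`. Then `c > 0`, `P(|X| ≤ c) = 1 - ε` (no atoms), and the CVaR is
`-(1/(1-ε)) E[|X|; |X| ≤ c]`, where by the layer-cake formula
`E[|X|; |X| ≤ c] = ∫₀ᶜ (G(c) - G(t)) dt` with `G(t) = P(|X| ≤ t)`.
Moving the mean of a Gaussian away from `0` strictly lowers `G(t)` for every `t > 0`: the density
loses more mass at the near end of `[-t, t]` than it gains at the far end. So for larger `|μ|` the
level `c` is larger and the integrand is pointwise larger, and the truncated mean strictly grows. -/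

open Set
open scoped NNReal

theorem intervalIntegral_sub_lt_of_lt_of_eq {F G : ℝ → ℝ} (hF : Monotone F) (hG : Monotone G)
    (hGF : ∀ t, 0 < t → G t < F t) {a b : ℝ} (ha : 0 < a) (hab : F a = G b) :
    ∫ t in 0..a, (F a - F t) < ∫ t in 0..b, (G b - G t) := by
  have hab' : a ≤ b := by
    by_contra! h
    linarith [hG h.le, hGF a ha]
  have hint : ∀ x y, IntervalIntegrable (fun t => G b - G t) volume x y := fun x y =>
    intervalIntegrable_const.sub hG.intervalIntegrable
  calc ∫ t in 0..a, (F a - F t)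
      < ∫ t in 0..a, (G b - G t) := by
        rw [← sub_pos, ← intervalIntegral.integral_sub (hint 0 a)
          (intervalIntegrable_const.sub hF.intervalIntegrable)]
        refine intervalIntegral.intervalIntegral_pos_of_pos_on
          ((hint 0 a).sub (intervalIntegrable_const.sub hF.intervalIntegrable)) ?_ ha
        intro t ht
        linarith [hGF t ht.1]
    _ ≤ (∫ t in 0..a, (G b - G t)) + ∫ t in a..b, (G b - G t) :=
        le_add_of_nonneg_right <| intervalIntegral.integral_nonneg hab' fun t ht =>
          sub_nonneg.2 (hG ht.2)
    _ = ∫ t in 0..b, (G b - G t) :=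
        intervalIntegral.integral_add_adjacent_intervals (hint 0 a) (hint a b)

theorem setIntegral_le_eq_intervalIntegral {α : Type*} [MeasurableSpace α] (P : Measure α)
    [IsFiniteMeasure P] {f : α → ℝ} (hf : Measurable f) (hf₀ : 0 ≤ f) {c : ℝ} (hc : 0 ≤ c) :
    ∫ x in {x | f x ≤ c}, f x ∂P =
      ∫ t in 0..c, (P.real {x | f x ≤ c} - P.real {x | f x ≤ t}) := by
  have hle : ∀ t, MeasurableSet {x | f x ≤ t} := fun t => measurableSet_le hf measurable_const
  have hint : IntegrableOn f {x | f x ≤ c} P := by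
    refine Measure.integrableOn_of_bounded (M := c) (measure_ne_top _ _)
      hf.aestronglyMeasurable ?_
    filter_upwards [ae_restrict_mem (hle c)] with x hx
    rwa [Real.norm_eq_abs, abs_of_nonneg (hf₀ x)]
  have hlayer : ∀ t ∈ Ioi (0 : ℝ), (P.restrict {x | f x ≤ c}).real {x | t < f x} =
      (Ioc 0 c).indicator (fun t => P.real {x | f x ≤ c} - P.real {x | f x ≤ t}) t := by
    intro t ht
    rw [measureReal_restrict_apply (measurableSet_lt measurable_const hf)]
    by_cases htc : t ≤ c
    · have hdiff : {x | t < f x} ∩ {x | f x ≤ c} = {x | f x ≤ c} \ {x | f x ≤ t} := by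
        ext x; simp [and_comm]
      rw [indicator_of_mem (show t ∈ Ioc 0 c from ⟨ht, htc⟩), hdiff, measureReal_sdiff _ (hle t)]
      exact fun x (hx : f x ≤ t) => hx.trans htc
    · have hempty : {x | t < f x} ∩ {x | f x ≤ c} = ∅ :=
        eq_empty_of_forall_notMem fun x hx => htc (hx.1.le.trans hx.2)
      rw [indicator_of_notMem (fun h => htc h.2), hempty, measureReal_empty]
  rw [hint.integral_eq_integral_meas_lt (ae_of_all _ hf₀),
    setIntegral_congr_fun measurableSet_Ioi hlayer, setIntegral_indicator measurableSet_Ioc,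
    inter_eq_right.2 Ioc_subset_Ioi_self, intervalIntegral.integral_of_le hc]

theorem cvar_neg_abs (P : Measure ℝ) [IsFiniteMeasure P] (ε : ℝ) {c : ℝ} (hc : 0 ≤ c) :
    cvar P ε (fun x => -|x|) (-c) =
      -(1 / (1 - ε) * ∫ t in 0..c, (P.real {x | |x| ≤ c} - P.real {x | |x| ≤ t})) := by
  simp only [cvar, neg_le_neg_iff, integral_neg,
    setIntegral_le_eq_intervalIntegral P continuous_abs.measurable (fun x => abs_nonneg x) hc]
  ring

theorem pos_of_measureReal_le_abs_lt_one (P : Measure ℝ) [IsProbabilityMeasure P] {c : ℝ}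
    (h : P.real {x | c ≤ |x|} < 1) : 0 < c := by
  by_contra! hc
  have huniv : {x : ℝ | c ≤ |x|} = univ := eq_univ_of_forall fun x => hc.trans (abs_nonneg x)
  simp [huniv] at h

theorem measureReal_abs_le_add_measureReal_le_abs (P : Measure ℝ) [IsProbabilityMeasure P]
    [NullSingletonClass P] (c : ℝ) :
    P.real {x | |x| ≤ c} + P.real {x | c ≤ |x|} = 1 := by
  have hunion : {x : ℝ | |x| ≤ c} ∪ {x | c ≤ |x|} = univ :=
    eq_univ_of_forall fun x => le_total |x| c
  have hinter : P ({x : ℝ | |x| ≤ c} ∩ {x | c ≤ |x|}) = 0 := by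
    refine measure_mono_null (fun x hx => ?_) ((toFinite {c, -c}).measure_zero P)
    have hxc : |x| = c := le_antisymm hx.1 hx.2
    rcases (abs_eq (hxc ▸ abs_nonneg x)).1 hxc with rfl | rfl <;> simp
  have := measureReal_union_add_inter₀ (μ := P) (s := {x : ℝ | |x| ≤ c})
    (measurableSet_le measurable_const continuous_abs.measurable).nullMeasurableSet
  rwa [hunion, probReal_univ, measureReal_def, hinter, ENNReal.toReal_zero, add_zero,
    eq_comm] at this

theorem neg_pos_and_measureReal_abs_le_neg_eq {P : Measure ℝ} [IsProbabilityMeasure P]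
    [NullSingletonClass P] {K ε : ℝ} (hε : ε ∈ Ioo 0 1)
    (hK : P {x | -|x| ≤ K} = ENNReal.ofReal ε) :
    0 < -K ∧ P.real {x | |x| ≤ -K} = 1 - ε := by
  have htail : P.real {x | -K ≤ |x|} = ε := by
    rw [show {x : ℝ | -K ≤ |x|} = {x | -|x| ≤ K} by ext; exact neg_le (α := ℝ), measureReal_def,
      hK, ENNReal.toReal_ofReal hε.1.le]
  refine ⟨pos_of_measureReal_le_abs_lt_one P (htail ▸ hε.2), ?_⟩
  linarith [measureReal_abs_le_add_measureReal_le_abs P (-K)]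

theorem monotone_measureReal_abs_le (P : Measure ℝ) [IsFiniteMeasure P] :
    Monotone fun t => P.real {x | |x| ≤ t} :=
  fun s t hst => measureReal_mono fun x (hx : |x| ≤ s) => hx.trans hst

theorem gaussianPDFReal_lt_of_abs_sub_lt {μ : ℝ} {v : ℝ≥0} (hv : v ≠ 0) {x y : ℝ}
    (h : |x - μ| < |y - μ|) : gaussianPDFReal μ v y < gaussianPDFReal μ v x := by
  simp only [gaussianPDFReal]
  exact mul_lt_mul_of_pos_left (Real.exp_lt_exp.2 <|
    div_lt_div_of_pos_right (neg_lt_neg (sq_lt_sq.2 h)) (by positivity)) (by positivity)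

theorem strictAntiOn_intervalIntegral_neg_sub_sub {φ : ℝ → ℝ} (hφ : Continuous φ)
    (hdec : ∀ x y, |x| < |y| → φ y < φ x) {t : ℝ} (ht : 0 < t) :
    StrictAntiOn (fun m => ∫ u in (-t - m)..(t - m), φ u) (Ici 0) := by
  set Φ := fun y => ∫ u in 0..y, φ u
  have hΦ : ∀ y, HasDerivAt Φ (φ y) y := fun y => (hφ.integral_hasStrictDerivAt 0 y).hasDerivAt
  have heq : (fun m => ∫ u in (-t - m)..(t - m), φ u) = fun m => Φ (t - m) - Φ (-t - m) := by
    funext m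
    exact (intervalIntegral.integral_interval_sub_left (hφ.intervalIntegrable _ _)
      (hφ.intervalIntegrable _ _)).symm
  have hderiv : ∀ m, HasDerivAt (fun m => Φ (t - m) - Φ (-t - m)) (φ (-t - m) - φ (t - m)) m := by
    intro m
    exact (((hΦ (t - m)).comp m ((hasDerivAt_id m).const_sub t)).sub
      ((hΦ (-t - m)).comp m ((hasDerivAt_id m).const_sub (-t)))).congr_deriv (by ring)
  rw [heq]
  refine strictAntiOn_of_deriv_neg (convex_Ici 0)
    (fun m _ => (hderiv m).continuousAt.continuousWithinAt) fun m hm => ?_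
  rw [interior_Ici] at hm
  rw [(hderiv m).deriv, sub_neg]
  refine hdec _ _ ?_
  have hm₀ : 0 < m := hm
  rw [show -t - m = -(t + m) by ring, abs_neg, abs_of_pos (a := t + m) (by linarith),
    abs_sub_lt_iff]
  constructor <;> linarith

theorem gaussianReal_real_abs_le {v : ℝ≥0} (hv : v ≠ 0) (m : ℝ) {t : ℝ} (ht : 0 ≤ t) :
    (gaussianReal m v).real {x | |x| ≤ t} = ∫ u in (-t - m)..(t - m), gaussianPDFReal 0 v u := by
  have hset : {x : ℝ | |x| ≤ t} = Icc (-t) t := by ext x; simp [abs_le]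
  rw [measureReal_def, gaussianReal_apply_eq_integral m hv, hset,
    ENNReal.toReal_ofReal
      (setIntegral_nonneg measurableSet_Icc fun x _ => gaussianPDFReal_nonneg _ _ _),
    ← intervalIntegral.integral_comp_sub_right, intervalIntegral.integral_of_le (by linarith),
    integral_Icc_eq_integral_Ioc]
  simp only [gaussianPDFReal_sub, zero_add]

theorem gaussianReal_neg_abs_le (m : ℝ) (v : ℝ≥0) (t : ℝ) :
    gaussianReal (-m) v {x | |x| ≤ t} = gaussianReal m v {x | |x| ≤ t} := by
  rw [← gaussianReal_map_neg, Measure.map_apply measurable_neg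
    (measurableSet_le continuous_abs.measurable measurable_const)]
  simp only [preimage_ofPred_eq, abs_neg]

theorem gaussianReal_real_abs_le_lt_of_abs_lt {v : ℝ≥0} (hv : v ≠ 0) {m₁ m₂ t : ℝ} (ht : 0 < t)
    (h : |m₁| < |m₂|) :
    (gaussianReal m₂ v).real {x | |x| ≤ t} < (gaussianReal m₁ v).real {x | |x| ≤ t} := by
  have habs : ∀ m, (gaussianReal m v).real {x | |x| ≤ t} =
      (gaussianReal |m| v).real {x | |x| ≤ t} := by
    intro m
    rcases abs_choice m with h | h <;> simp only [h, measureReal_def, gaussianReal_neg_abs_le]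
  simp only [habs m₁, habs m₂, gaussianReal_real_abs_le hv _ ht.le]
  exact strictAntiOn_intervalIntegral_neg_sub_sub (by unfold gaussianPDFReal; fun_prop)
    (fun x y hxy => gaussianPDFReal_lt_of_abs_sub_lt hv (by simpa using hxy)) ht
    (abs_nonneg m₁) (abs_nonneg m₂) h

/-- Fix `σ > 0` and `ε ∈ (0,1)`. For each `μ` let `X_μ ~ N(μ, σ²)`, let
`k μ = VaR_ε[-|X_μ|]`, and let `g μ = CVaR_ε[-|X_μ|]`. Then `g` is monotonically
decreasing in `|μ|`: for any `μ₁, μ₂` with `|μ₁| < |μ₂|`, one has `g μ₁ > g μ₂`. -/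
theorem cvar_neg_abs_strictAnti_in_abs_mean
    (σ ε : ℝ) (hσ : 0 < σ) (hε : ε ∈ Set.Ioo (0 : ℝ) 1)
    (k g : ℝ → ℝ)
    (hk : ∀ μ, gaussMeas μ σ {x | -|x| ≤ k μ} = ENNReal.ofReal ε)
    (hg : ∀ μ, g μ = cvar (gaussMeas μ σ) ε (fun x => -|x|) (k μ)) :
    ∀ μ₁ μ₂, |μ₁| < |μ₂| → g μ₂ < g μ₁ := by
  intro μ₁ μ₂ hμ
  unfold gaussMeas at hk hg
  set v : ℝ≥0 := ⟨σ ^ 2, sq_nonneg σ⟩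
  have hv : v ≠ 0 := by rw [← NNReal.coe_ne_zero]; exact (pow_pos hσ 2).ne'
  have hvar : ∀ μ, 0 < -k μ ∧ (gaussianReal μ v).real {x | |x| ≤ -k μ} = 1 - ε := fun μ =>
    have := nullSingletonClass_gaussianReal (μ := μ) hv
    neg_pos_and_measureReal_abs_le_neg_eq hε (hk μ)
  have hcvar : ∀ μ, g μ = -(1 / (1 - ε) * ∫ t in 0..(-k μ),
      ((gaussianReal μ v).real {x | |x| ≤ -k μ} - (gaussianReal μ v).real {x | |x| ≤ t})) := by
    intro μ
    rw [hg, ← cvar_neg_abs _ _ (hvar μ).1.le, neg_neg]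
  have hlt := intervalIntegral_sub_lt_of_lt_of_eq (monotone_measureReal_abs_le _)
    (monotone_measureReal_abs_le _) (fun t ht => gaussianReal_real_abs_le_lt_of_abs_lt hv ht hμ)
    (hvar μ₁).1 ((hvar μ₁).2.trans (hvar μ₂).2.symm)
  rw [hcvar, hcvar]
  exact neg_lt_neg (mul_lt_mul_of_pos_left hlt (one_div_pos.2 (sub_pos.2 hε.2)))
end

section
/- Let X ~ N(μ, σ²) with σ > 0 and let ε ∈ (0,1). If μ < 0 and VaR_ε[X] < 0, then CVaR_ε[X] > CVaR_ε[-|X|]. -/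
/-! Since `{X ≤ k} ⊆ {-|X| ≤ k}`, the quantiles satisfy `kY ≤ kX`, and `kY < 0` because
`-|X| ≤ 0`. Hence `x ↦ x·1{kX ≤ x}` dominates `x ↦ -|x|·1{kY ≤ -|x|}` pointwise, strictly on
`(0, -kY]`, an interval of positive Gaussian measure. -/

open MeasureTheory ProbabilityTheory

open Set

theorem integral_lt_integral_of_le_of_measure_setOf_lt_ne_zero {α : Type*} [MeasurableSpace α]
    {μ : Measure α} {f g : α → ℝ} (hf : Integrable f μ) (hg : Integrable g μ) (hle : f ≤ g)
    (hlt : μ {x | f x < g x} ≠ 0) : ∫ x, f x ∂μ < ∫ x, g x ∂μ := by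
  rw [← sub_pos, ← integral_sub hg hf,
    integral_pos_iff_support_of_nonneg (fun x => sub_nonneg.2 (hle x)) (hg.sub hf)]
  exact (pos_iff_ne_zero.2 hlt).trans_le
    (measure_mono fun x hx => sub_ne_zero.2 (ne_of_gt hx))

section AbsolutelyContinuous

variable {P : Measure ℝ}

theorem measure_Ioc_ne_zero_of_volume_absolutelyContinuous (hP : volume ≪ P) {a b : ℝ}
    (hab : a < b) : P (Ioc a b) ≠ 0 := fun h =>
  (by simpa using hP h : b ≤ a).not_gt hab

theorem le_of_measure_Iic_le_measure_Iic [IsFiniteMeasure P] (hP : volume ≪ P) {a b : ℝ}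
    (h : P (Iic b) ≤ P (Iic a)) : b ≤ a := by
  by_contra! hab
  have hsplit : P (Iic b) = P (Iic a) + P (Ioc a b) := by
    rw [← Iic_union_Ioc_eq_Iic hab.le, measure_union (Iic_disjoint_Ioc le_rfl) measurableSet_Ioc]
  exact h.not_gt (hsplit ▸ ENNReal.lt_add_right (measure_ne_top P _)
    (measure_Ioc_ne_zero_of_volume_absolutelyContinuous hP hab))

end AbsolutelyContinuous

theorem neg_of_measure_setOf_neg_abs_le_lt_one {P : Measure ℝ} [IsProbabilityMeasure P] {k : ℝ}
    (h : P {x | -|x| ≤ k} < 1) : k < 0 := by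
  by_contra! hk
  refine h.ne ?_
  rw [show {x : ℝ | -|x| ≤ k} = univ from
    eq_univ_of_forall fun x => (neg_nonpos.2 (abs_nonneg x)).trans hk, measure_univ]

theorem setIntegral_neg_abs_lt_setIntegral_id {P : Measure ℝ} (hint : Integrable id P)
    {k a : ℝ} (hka : k ≤ a) (ha : a ≤ 0) (hpos : P (Ioc 0 (-k)) ≠ 0) :
    ∫ x in {x | k ≤ -|x|}, -|x| ∂P < ∫ x in {x | a ≤ x}, x ∂P := by
  rw [← integral_indicator (measurableSet_le measurable_const (by fun_prop)),
    ← integral_indicator (s := {x | a ≤ x}) measurableSet_Ici]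
  refine integral_lt_integral_of_le_of_measure_setOf_lt_ne_zero
    (hint.abs.neg.indicator (measurableSet_le measurable_const (by fun_prop)))
    (hint.indicator measurableSet_Ici) (fun x => ?_) (fun h => hpos (measure_mono_null ?_ h))
  · simp only [indicator_apply, mem_ofPred_eq]
    split_ifs <;> cases abs_cases x <;> linarith
  · intro x hx
    have hx0 : 0 < x := hx.1
    simp only [indicator_apply, mem_ofPred_eq, abs_of_pos hx0]
    rw [if_pos (le_neg.2 hx.2), if_pos (ha.trans hx0.le)]
    linarith

theorem cvar_gt_cvar_neg_abs_of_neg_mean_general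
    (μ σ ε kX kY : ℝ) (hσ : 0 < σ) (hε : ε ∈ Set.Ioo (0 : ℝ) 1)
    (hkX : gaussMeas μ σ {x | x ≤ kX} = ENNReal.ofReal ε)
    (hkY : gaussMeas μ σ {x | -|x| ≤ kY} = ENNReal.ofReal ε)
    (hkXneg : kX < 0) :
    cvar (gaussMeas μ σ) ε (fun x => x) kX > cvar (gaussMeas μ σ) ε (fun x => -|x|) kY := by
  have : IsProbabilityMeasure (gaussMeas μ σ) := instIsProbabilityMeasureGaussianReal _ _
  have hP : volume ≪ gaussMeas μ σ :=
    gaussianReal_absolutelyContinuous' μ (NNReal.coe_ne_zero.1 (pow_pos hσ 2).ne')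
  have hkY_neg : kY < 0 :=
    neg_of_measure_setOf_neg_abs_le_lt_one (hkY ▸ ENNReal.ofReal_lt_one.2 hε.2)
  have hkY_le_kX : kY ≤ kX := le_of_measure_Iic_le_measure_Iic hP <|
    (measure_mono fun x hx => (neg_abs_le x).trans hx).trans (hkY.trans hkX.symm).le
  have hint : Integrable id (gaussMeas μ σ) := (memLp_id_gaussianReal 1).integrable le_rfl
  exact mul_lt_mul_of_pos_left
    (setIntegral_neg_abs_lt_setIntegral_id hint hkY_le_kX hkXneg.le
      (measure_Ioc_ne_zero_of_volume_absolutelyContinuous hP (neg_pos.2 hkY_neg)))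
    (one_div_pos.2 (sub_pos.2 hε.2))

/-- For `X ~ N(μ, σ²)` with `σ > 0` and `ε ∈ (0,1)`: if `μ < 0` and `VaR_ε[X] < 0`,
then `CVaR_ε[X] > CVaR_ε[-|X|]`. Here `kX = VaR_ε[X]` and `kY = VaR_ε[-|X|]`. -/
theorem cvar_gt_cvar_neg_abs_of_neg_mean
    (μ σ ε kX kY : ℝ) (hσ : 0 < σ) (hε : ε ∈ Set.Ioo (0 : ℝ) 1)
    (hkX : gaussMeas μ σ {x | x ≤ kX} = ENNReal.ofReal ε)
    (hkY : gaussMeas μ σ {x | -|x| ≤ kY} = ENNReal.ofReal ε)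
    (hμ : μ < 0) (hkXneg : kX < 0) :
    cvar (gaussMeas μ σ) ε (fun x => x) kX > cvar (gaussMeas μ σ) ε (fun x => -|x|) kY :=
  cvar_gt_cvar_neg_abs_of_neg_mean_general μ σ ε kX kY hσ hε hkX hkY hkXneg
end
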